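/- For n×n real matrices A₁, A₂, Q and T > 0, the block matrix exponential identity holds: [I 0] · exp([[A₁, Q],[0, A₂]] T) · [0; I] = ∫₀^T e^{A₁(T−t)} Q e^{A₂ t} dt. -/

import Mathlib

/-!
Write `E s = e^{sM}` for `M = [[A₁, Q], [0, A₂]]`. The powers of `M` are again block upper
triangular with diagonal blocks `A₁ᵏ, A₂ᵏ`, so the lower-right block of `E s` is `e^{sA₂}`, and
`E' = M E` gives the upper-right block `B` the equation `B' = A₁ B + Q e^{sA₂}`, `B 0 = 0`.
Hence `s ↦ e^{(T-s)A₁} B s` has derivative `e^{(T-s)A₁} Q e^{sA₂}`, and the fundamental theorem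
of calculus on `[0, T]` gives `B T = ∫₀ᵀ e^{(T-t)A₁} Q e^{tA₂} dt`.
-/

open Matrix MeasureTheory

/-- The matrix exponential `e^{tA}`. -/
noncomputable def mexp {m : Type*} [Fintype m] [DecidableEq m]
    (A : Matrix m m ℝ) (t : ℝ) : Matrix m m ℝ :=
  NormedSpace.exp (t • A)

open NormedSpace Nat

-- The claim is norm-free; some normed-algebra structure on matrices is needed only to use the
-- calculus of `exp`.
attribute [local instance] Matrix.linftyOpNormedAddCommGroup Matrix.linftyOpNormedSpace
  Matrix.linftyOpNormedRing Matrix.linftyOpNormedAlgebra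

namespace Matrix

variable {l m n o : Type*} [Fintype l] [Fintype m] [Fintype n] [Fintype o]

noncomputable def submatrixCLM (r : l → m) (c : o → n) : Matrix m n ℝ →L[ℝ] Matrix l o ℝ :=
  LinearMap.toContinuousLinearMap
    { toFun := fun M => M.submatrix r c
      map_add' := fun _ _ => rfl
      map_smul' := fun _ _ => rfl }

variable [DecidableEq n] [DecidableEq o]

theorem fromBlocks_zero₂₁_pow {R : Type*} [Semiring R] (A : Matrix n n R) (B : Matrix n o R)
    (D : Matrix o o R) (k : ℕ) : ∃ C, fromBlocks A B 0 D ^ k = fromBlocks (A ^ k) C 0 (D ^ k) := by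
  induction k with
  | zero => exact ⟨0, by simp [fromBlocks_one]⟩
  | succ k ih =>
    obtain ⟨C, hC⟩ := ih
    exact ⟨A ^ k * B + C * D, by simp [pow_succ, hC, fromBlocks_multiply]⟩

theorem toBlocks₂₂_exp_fromBlocks_zero₂₁ (A : Matrix n n ℝ) (B : Matrix n o ℝ)
    (D : Matrix o o ℝ) : (exp (fromBlocks A B 0 D)).toBlocks₂₂ = exp D := by
  have hterm (k : ℕ) : submatrixCLM Sum.inr Sum.inr ((k !⁻¹ : ℝ) • fromBlocks A B 0 D ^ k)
      = (k !⁻¹ : ℝ) • D ^ k := by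
    obtain ⟨C, hC⟩ := fromBlocks_zero₂₁_pow A B D k
    rw [map_smul, hC]
    rfl
  have h := (exp_series_hasSum_exp' (𝕂 := ℝ) (fromBlocks A B 0 D)).map
    (submatrixCLM Sum.inr Sum.inr) (submatrixCLM _ _).continuous
  simp only [Function.comp_def, hterm] at h
  exact h.unique (exp_series_hasSum_exp' D)

end Matrix

section mexp

variable {m : Type*} [Fintype m] [DecidableEq m]

theorem mexp_zero (A : Matrix m m ℝ) : mexp A 0 = 1 := by
  simp [mexp]

theorem hasDerivAt_mexp (A : Matrix m m ℝ) (t : ℝ) : HasDerivAt (mexp A) (mexp A t * A) t :=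
  hasDerivAt_exp_smul_const A t

theorem hasDerivAt_mexp' (A : Matrix m m ℝ) (t : ℝ) : HasDerivAt (mexp A) (A * mexp A t) t :=
  hasDerivAt_exp_smul_const' A t

theorem continuous_mexp (A : Matrix m m ℝ) : Continuous (mexp A) :=
  (differentiable_exp_smul_const ℝ A).continuous

theorem continuous_mexp_sub_mul_mul_mexp (A B D : Matrix m m ℝ) (T : ℝ) :
    Continuous fun t => mexp A (T - t) * B * mexp D t :=
  (((continuous_mexp A).comp (continuous_sub_left T)).mul continuous_const).mul (continuous_mexp D)

theorem toBlocks₂₂_mexp_fromBlocks_zero₂₁ (A B D : Matrix m m ℝ) (t : ℝ) :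
    (mexp (fromBlocks A B 0 D) t).toBlocks₂₂ = mexp D t := by
  rw [mexp, fromBlocks_smul, smul_zero, toBlocks₂₂_exp_fromBlocks_zero₂₁]
  rfl

theorem hasDerivAt_toBlocks₁₂_mexp_fromBlocks_zero₂₁ (A B D : Matrix m m ℝ) (t : ℝ) :
    HasDerivAt (fun s => (mexp (fromBlocks A B 0 D) s).toBlocks₁₂)
      (A * (mexp (fromBlocks A B 0 D) t).toBlocks₁₂ + B * mexp D t) t := by
  set E := mexp (fromBlocks A B 0 D) t
  have hblock : (fromBlocks A B 0 D * E).toBlocks₁₂ = A * E.toBlocks₁₂ + B * E.toBlocks₂₂ := by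
    conv_lhs => rw [← fromBlocks_toBlocks E]
    simp [fromBlocks_multiply]
  rw [← toBlocks₂₂_mexp_fromBlocks_zero₂₁ A B D t, ← hblock]
  have hE := hasDerivAt_mexp' (fromBlocks A B 0 D) t
  exact (submatrixCLM Sum.inl Sum.inr).hasFDerivAt.comp_hasDerivAt t hE

theorem hasDerivAt_mexp_sub_mul_toBlocks₁₂ (A B D : Matrix m m ℝ) (T t : ℝ) :
    HasDerivAt (fun s => mexp A (T - s) * (mexp (fromBlocks A B 0 D) s).toBlocks₁₂)
      (mexp A (T - t) * B * mexp D t) t := by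
  have hE : HasDerivAt (fun s => mexp A (T - s)) (-(mexp A (T - t) * A)) t := by
    have h := (hasDerivAt_mexp A (T - t)).scomp t ((hasDerivAt_id t).const_sub T)
    rwa [neg_one_smul] at h
  refine (hE.mul (hasDerivAt_toBlocks₁₂_mexp_fromBlocks_zero₂₁ A B D t)).congr_deriv ?_
  noncomm_ring

theorem toBlocks₁₂_mexp_fromBlocks_zero₂₁ (A B D : Matrix m m ℝ) (T : ℝ) :
    (mexp (fromBlocks A B 0 D) T).toBlocks₁₂ = ∫ t in 0..T, mexp A (T - t) * B * mexp D t := by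
  rw [intervalIntegral.integral_eq_sub_of_hasDerivAt
    (fun t _ => hasDerivAt_mexp_sub_mul_toBlocks₁₂ A B D T t)
    ((continuous_mexp_sub_mul_mul_mexp A B D T).intervalIntegrable 0 T)]
  simp [mexp_zero, ← fromBlocks_one]

end mexp

theorem block_exp_integral_general {n : ℕ}
    (A₁ A₂ Q : Matrix (Fin n) (Fin n) ℝ) (T : ℝ) :
    (mexp (Matrix.fromBlocks A₁ Q 0 A₂) T).toBlocks₁₂
      = Matrix.of fun i j =>
          ∫ t in (0 : ℝ)..T, (mexp A₁ (T - t) * Q * mexp A₂ t) i j := by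
  ext i j
  rw [toBlocks₁₂_mexp_fromBlocks_zero₂₁, of_apply]
  exact ((entryLinearMap ℝ ℝ i j).toContinuousLinearMap.intervalIntegral_comp_comm
    ((continuous_mexp_sub_mul_mul_mexp A₁ Q A₂ T).intervalIntegrable 0 T)).symm

theorem block_exp_integral {n : ℕ}
    (A₁ A₂ Q : Matrix (Fin n) (Fin n) ℝ) (T : ℝ) (hT : 0 < T) :
    (mexp (Matrix.fromBlocks A₁ Q 0 A₂) T).toBlocks₁₂
      = Matrix.of fun i j =>
          ∫ t in (0 : ℝ)..T, (mexp A₁ (T - t) * Q * mexp A₂ t) i j :=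
  block_exp_integral_general A₁ A₂ Q T
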